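/- Let $\kappa$ be a regular uncountable cardinal. The set CUB (characteristic functions of supersets of clubs) does not have the property of Baire in ${}^{\kappa}2$: for every open set $O \subseteq {}^{\kappa}2$, the symmetric difference $(O \setminus \mathrm{CUB}) \cup (\mathrm{CUB} \setminus O)$ is not meager. -/

import Mathlib

open Cardinal Set

noncomputable section

/-- The basic open set `[ν]` determined by a pattern `ν` of length `β`:
all `η` agreeing with `ν` below `β`. -/
def cyl (β : Ordinal.{0}) (ν : Ordinal.{0} → Bool) : Set (Ordinal.{0} → Bool) :=
  {η | ∀ i < β, η i = ν i}

/-- `A` is nowhere dense in `^κ2`: every `ν ∈ ^{<κ}2` has an extension `η`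
whose basic open set avoids `A`. -/
def Nwd (κ : Cardinal.{0}) (A : Set (Ordinal.{0} → Bool)) : Prop :=
  ∀ β < κ.ord, ∀ ν : Ordinal.{0} → Bool,
    ∃ γ, γ < κ.ord ∧ β ≤ γ ∧ ∃ η : Ordinal.{0} → Bool,
      (∀ i < β, η i = ν i) ∧ cyl γ η ∩ A = ∅

/-- `A` is meager in `^κ2`: covered by a union of `κ` many nowhere dense sets. -/
def MeagerB (κ : Cardinal.{0}) (A : Set (Ordinal.{0} → Bool)) : Prop :=
  ∃ R : Ordinal.{0} → Set (Ordinal.{0} → Bool),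
    (∀ ξ < κ.ord, Nwd κ (R ξ)) ∧ A ⊆ ⋃ ξ ∈ Set.Iio κ.ord, R ξ

/-- `A` is open in the bounded topology on `^κ2`. -/
def IsOpenB (κ : Cardinal.{0}) (A : Set (Ordinal.{0} → Bool)) : Prop :=
  ∀ η ∈ A, ∃ i < κ.ord, cyl i η ⊆ A

/-- `C` is a closed unbounded subset of (the ordinals below) `o`. -/
def ClubIn (o : Ordinal.{0}) (C : Set Ordinal.{0}) : Prop :=
  C ⊆ Set.Iio o ∧ (∀ β < o, ∃ γ ∈ C, β ≤ γ) ∧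
    (∀ S : Set Ordinal.{0}, S ⊆ C → S.Nonempty → sSup S < o → sSup S ∈ C)

/-- CUB: the set of `η ∈ ^κ2` taking value 1 on some club of `κ`. -/
def CUB (κ : Cardinal.{0}) : Set (Ordinal.{0} → Bool) :=
  {η | ∃ C : Set Ordinal.{0}, ClubIn κ.ord C ∧ ∀ i ∈ C, η i = true}

/-- `A ⊆ ^κ2` has strong measure zero. -/
def SMZ (κ : Cardinal.{0}) (A : Set (Ordinal.{0} → Bool)) : Prop :=
  ∀ X : Set Ordinal.{0}, X ⊆ Set.Iio κ.ord → #X = Cardinal.lift.{1} κ →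
    ∃ f : Ordinal.{0} → (Ordinal.{0} → Bool), A ⊆ ⋃ ξ ∈ X, cyl ξ (f ξ)

/-- `f <*_κ g` on the index set `X`: `|{i ∈ X : f i ≥ g i}| < κ`. -/
def LtStarOn (κ : Cardinal.{0}) (X : Set Ordinal.{0}) (f g : Ordinal.{0} → Ordinal.{0}) : Prop :=
  #{i : Ordinal | i ∈ X ∧ g i ≤ f i} < Cardinal.lift.{1} κ

/-- `f <*_κ g` on all of `κ`. -/
def LtStar (κ : Cardinal.{0}) (f g : Ordinal.{0} → Ordinal.{0}) : Prop :=
  LtStarOn κ (Set.Iio κ.ord) f g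

/-- `f` maps ordinals below `κ` to ordinals below `κ`, i.e. `f ∈ ^κκ`. -/
def IntoKappa (κ : Cardinal.{0}) (f : Ordinal.{0} → Ordinal.{0}) : Prop :=
  ∀ i < κ.ord, f i < κ.ord

/-- `F ⊆ ^κκ` is `<*`-bounded. -/
def BoundedFam (κ : Cardinal.{0}) (F : Set (Ordinal.{0} → Ordinal.{0})) : Prop :=
  ∃ g, IntoKappa κ g ∧ ∀ f ∈ F, LtStar κ f g

/-- `F ⊆ ^κκ` is dominating. -/
def DominatingFam (κ : Cardinal.{0}) (F : Set (Ordinal.{0} → Ordinal.{0})) : Prop :=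
  ∀ g, IntoKappa κ g → ∃ f ∈ F, LtStar κ g f

/-- A coding family: for each `i < κ`, `F i` is an injection of `^i2` into `κ`
(it depends only on, and is injective on, restrictions to `i`). -/
def CodingOK (κ : Cardinal.{0}) (F : Ordinal.{0} → (Ordinal.{0} → Bool) → Ordinal.{0}) : Prop :=
  (∀ i < κ.ord, ∀ ν : Ordinal.{0} → Bool, F i ν < κ.ord) ∧
  (∀ i : Ordinal.{0}, ∀ ν ν' : Ordinal.{0} → Bool, (∀ j < i, ν j = ν' j) → F i ν = F i ν') ∧
  (∀ i < κ.ord, ∀ ν ν' : Ordinal.{0} → Bool, F i ν = F i ν' → ∀ j < i, ν j = ν' j)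

/-- `g` (restricted to domain `β`) is a strictly increasing continuous sequence
of ordinals below `κ`. -/
def SIC (κ : Cardinal.{0}) (β : Ordinal.{0}) (g : Ordinal.{0} → Ordinal.{0}) : Prop :=
  (∀ i < β, g i < κ.ord) ∧
  (∀ i j, i < j → j < β → g i < g j) ∧
  (∀ δ, δ < β → Order.IsSuccLimit δ → g δ = sSup (g '' Set.Iio δ))

/-- The open sets `A_ν` of the generalized Souslin representation of CUB:
if `ν` (of length `β`) is strictly increasing and continuous then
`A_ν = {η : ∀ i ∈ dom ν, η (ν i) = 1}`, and `A_ν = ∅` otherwise. -/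
def ANu (κ : Cardinal.{0}) (β : Ordinal.{0}) (g : Ordinal.{0} → Ordinal.{0}) : Set (Ordinal.{0} → Bool) :=
  {η | SIC κ β g ∧ ∀ i < β, η (g i) = true}

/-- The property of Baire in `^κ2` with the bounded topology. -/
def BaireProp (κ : Cardinal.{0}) (A : Set (Ordinal.{0} → Bool)) : Prop :=
  ∃ O, IsOpenB κ O ∧ MeagerB κ ((O \ A) ∪ (A \ O))

/-!
Suppose `(O \ CUB) ∪ (CUB \ O)` were covered by nowhere dense sets `R ξ`, `ξ < κ`. A fusion
argument of length `κ` runs through them: stage `ξ + 1` first fixes one more bit to `b` and then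
uses nowhere density of `R ξ` to extend to a basic open set missing `R ξ`; limit stages take unions,
which stay below `κ` by regularity. The resulting branch avoids every `R ξ` and equals `b` on the
club of stage lengths. With `b = 1` we get some `η ∈ CUB` avoiding the cover, so `η ∈ O`, hence a
basic open set around `η` lies in `O`. Running the fusion with `b = 0` inside that basic open set
gives `η' ∈ O` avoiding the cover and equal to `0` on a club; since `κ` is uncountable two clubs
meet, so `η' ∉ CUB`, a contradiction.
-/

open Order Function

theorem ClubIn.isClub {o : Ordinal.{0}} {C : Set Ordinal.{0}} (hC : ClubIn o C) :
    IsClub {x : Iio o | x.1 ∈ C} := by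
  refine ⟨fun d hdC hd _ a ha => ?_, fun x => ?_⟩
  · have hbdd : BddAbove (Subtype.val '' d) := ⟨a, by rintro _ ⟨y, hy, rfl⟩; exact ha.1 hy⟩
    have hsup : sSup (Subtype.val '' d) = a := by
      refine le_antisymm (csSup_le (hd.image _) (by rintro _ ⟨y, hy, rfl⟩; exact ha.1 hy)) ?_
      by_contra! hlt
      have hub : (⟨_, hlt.trans a.2⟩ : Iio o) ∈ upperBounds d :=
        fun y hy => le_csSup hbdd ⟨y, hy, rfl⟩
      exact hlt.not_ge (ha.2 hub)
    show a.1 ∈ C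
    rw [← hsup]
    exact hC.2.2 _ (by rintro _ ⟨y, hy, rfl⟩; exact hdC hy) (hd.image _) (hsup ▸ a.2)
  · obtain ⟨γ, hγC, hxγ⟩ := hC.2.1 x x.2
    exact ⟨⟨γ, hC.1 hγC⟩, hγC, hxγ⟩

theorem ClubIn.inter_nonempty {o : Ordinal.{0}} (ho : o.cof ≠ ℵ₀) (ho₀ : 0 < o)
    {C D : Set Ordinal.{0}} (hC : ClubIn o C) (hD : ClubIn o D) : (C ∩ D).Nonempty := by
  have : Nonempty (Iio o) := ⟨⟨0, ho₀⟩⟩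
  have hcof : cof (Iio o) ≠ ℵ₀ := by
    rwa [Ordinal.cof_Iio, ← Ordinal.lift_cof, Ne, ← Cardinal.lift_aleph0.{1, 0}, Cardinal.lift_inj]
  obtain ⟨x, hxC, hxD⟩ := (hC.isClub.inter hcof hD.isClub).nonempty
  exact ⟨x, hxC, hxD⟩

theorem Order.IsNormal.clubIn_image {f : Ordinal.{0} → Ordinal.{0}} (hf : IsNormal f)
    {o : Ordinal.{0}} (hfo : ∀ ξ < o, f ξ < o) : ClubIn o (f '' Iio o) := by
  refine ⟨image_subset_iff.2 hfo, fun β hβ => ⟨f β, mem_image_of_mem f hβ, hf.strictMono.le_apply⟩,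
    fun S hS hSne hSo => ?_⟩
  set T := Iio o ∩ f ⁻¹' S
  have hTS : f '' T = S := by rw [image_inter_preimage, inter_eq_right.2 hS]
  have hTne : T.Nonempty := by rw [← hTS] at hSne; exact hSne.of_image
  have hfT : f (sSup T) = sSup S := hTS ▸ hf.map_sSup hTne ⟨o, fun ξ hξ => hξ.1.le⟩
  exact ⟨sSup T, hf.strictMono.le_apply.trans_lt (hfT ▸ hSo), hfT⟩

theorem notMem_CUB_of_eq_false_on_club {κ : Cardinal.{0}} (hreg : κ.IsRegular) (hκ : ℵ₀ < κ)
    {η : Ordinal.{0} → Bool} {C : Set Ordinal.{0}} (hC : ClubIn κ.ord C)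
    (hη : ∀ i ∈ C, η i = false) : η ∉ CUB κ := by
  rintro ⟨D, hD, hηD⟩
  obtain ⟨i, hiC, hiD⟩ := hC.inter_nonempty (hreg.cof_ord.symm ▸ hκ.ne') hreg.ord_pos hD
  simpa [hη i hiC] using hηD i hiD

section Fusion

variable (κ : Cardinal.{0}) (b : Bool)

/- A condition `p` is a length `p.1` together with a pattern `p.2`, of which only the values
below `p.1` matter. The `else` branch is never taken when `A` is nowhere dense and `p.1 < κ`. -/
open Classical in
def extendAvoiding (A : Set (Ordinal.{0} → Bool)) (p : Ordinal.{0} × (Ordinal.{0} → Bool)) :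
    Ordinal.{0} × (Ordinal.{0} → Bool) :=
  if h : ∃ q : Ordinal.{0} × (Ordinal.{0} → Bool), q.1 < κ.ord ∧ p.1 + 1 ≤ q.1 ∧
      q.2 ∈ cyl (p.1 + 1) (update p.2 p.1 b) ∧ cyl q.1 q.2 ∩ A = ∅
  then h.choose else (p.1 + 1, update p.2 p.1 b)

variable {κ b} {A : Set (Ordinal.{0} → Bool)} {p : Ordinal.{0} × (Ordinal.{0} → Bool)}

theorem lt_extendAvoiding_fst : p.1 < (extendAvoiding κ b A p).1 := by
  unfold extendAvoiding
  split_ifs with h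
  exacts [(lt_add_one _).trans_le h.choose_spec.2.1, lt_add_one _]

theorem extendAvoiding_snd_mem_cyl :
    (extendAvoiding κ b A p).2 ∈ cyl (p.1 + 1) (update p.2 p.1 b) := by
  unfold extendAvoiding
  split_ifs with h
  exacts [h.choose_spec.2.2.1, fun _ _ => rfl]

theorem extendAvoiding_spec (hκ : ℵ₀ ≤ κ) (hA : Nwd κ A) (hp : p.1 < κ.ord) :
    (extendAvoiding κ b A p).1 < κ.ord ∧
      cyl (extendAvoiding κ b A p).1 (extendAvoiding κ b A p).2 ∩ A = ∅ := by
  have h : ∃ q : Ordinal.{0} × (Ordinal.{0} → Bool), q.1 < κ.ord ∧ p.1 + 1 ≤ q.1 ∧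
      q.2 ∈ cyl (p.1 + 1) (update p.2 p.1 b) ∧ cyl q.1 q.2 ∩ A = ∅ := by
    obtain ⟨γ, hγ, hle, η, hη, hA⟩ :=
      hA (p.1 + 1) ((isSuccLimit_ord hκ).add_one_lt hp) (update p.2 p.1 b)
    exact ⟨(γ, η), hγ, hle, hη, hA⟩
  unfold extendAvoiding
  rw [dif_pos h]
  exact ⟨h.choose_spec.1, h.choose_spec.2.2.2⟩

/- The union of a chain of conditions; `false` outside the union is a junk value. -/
open Classical in
def glueConds (δ : Ordinal.{0}) (c : ∀ ξ < δ, Ordinal.{0} × (Ordinal.{0} → Bool)) :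
    Ordinal.{0} × (Ordinal.{0} → Bool) :=
  (⨆ ξ : Iio δ, (c ξ ξ.2).1, fun i =>
    if h : ∃ ξ, ∃ hξ : ξ < δ, i < (c ξ hξ).1 then (c _ h.choose_spec.choose).2 i else false)

variable (κ b) (R : Ordinal.{0} → Set (Ordinal.{0} → Bool))
  (p₀ : Ordinal.{0} × (Ordinal.{0} → Bool))

def fusion (ξ : Ordinal.{0}) : Ordinal.{0} × (Ordinal.{0} → Bool) :=
  Ordinal.limitRecOn ξ p₀ (fun ζ p => extendAvoiding κ b (R ζ) p) fun δ _ c => glueConds δ c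

@[simp]
theorem fusion_zero : fusion κ b R p₀ 0 = p₀ :=
  Ordinal.limitRecOn_zero ..

@[simp]
theorem fusion_add_one (ξ : Ordinal.{0}) :
    fusion κ b R p₀ (ξ + 1) = extendAvoiding κ b (R ξ) (fusion κ b R p₀ ξ) :=
  Ordinal.limitRecOn_add_one ..

theorem fusion_of_isSuccLimit {δ : Ordinal.{0}} (hδ : IsSuccLimit δ) :
    fusion κ b R p₀ δ = glueConds δ fun ξ _ => fusion κ b R p₀ ξ :=
  Ordinal.limitRecOn_limit _ _ _ _ hδ

theorem isNormal_fusion_fst : IsNormal fun ξ => (fusion κ b R p₀ ξ).1 := by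
  refine .of_succ_lt (fun ξ => ?_) fun {δ} hδ => ?_
  · rw [succ_eq_add_one, fusion_add_one]
    exact lt_extendAvoiding_fst
  · have : Nonempty (Iio δ) := ⟨⟨0, hδ.bot_lt⟩⟩
    rw [fusion_of_isSuccLimit κ b R p₀ hδ, glueConds, image_eq_range]
    exact isLUB_ciSup Ordinal.bddAbove_of_small

theorem fusion_snd_mem_cyl {ξ ζ : Ordinal.{0}} (h : ξ ≤ ζ) :
    (fusion κ b R p₀ ζ).2 ∈ cyl (fusion κ b R p₀ ξ).1 (fusion κ b R p₀ ξ).2 := by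
  induction ζ using Ordinal.limitRecOn generalizing ξ with
  | zero => rw [nonpos_iff_eq_zero.1 h]; exact fun _ _ => rfl
  | add_one ζ ih =>
    obtain h | rfl := h.lt_or_eq
    · intro i hi
      have hξζ := Order.lt_add_one_iff.1 h
      have hiζ : i < (fusion κ b R p₀ ζ).1 :=
        hi.trans_le ((isNormal_fusion_fst κ b R p₀).monotone hξζ)
      rw [fusion_add_one, extendAvoiding_snd_mem_cyl i (hiζ.trans (lt_add_one _)),
        update_of_ne hiζ.ne]
      exact ih hξζ i hi
    · exact fun _ _ => rfl
  | limit δ hδ ih =>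
    obtain h | rfl := h.lt_or_eq
    · intro i hi
      have hex : ∃ ξ', ∃ hξ' : ξ' < δ, i < (fusion κ b R p₀ ξ').1 := ⟨ξ, h, hi⟩
      obtain ⟨hlt, hi'⟩ := hex.choose_spec
      have hmax := max_lt h hlt
      -- the glued pattern reads stage `hex.choose`; it and stage `ξ` both agree with stage `max`
      rw [fusion_of_isSuccLimit κ b R p₀ hδ, glueConds]
      dsimp only
      rw [dif_pos hex, ← ih _ hmax (le_max_right _ _) i hi', ih _ hmax (le_max_left _ _) i hi]
    · exact fun _ _ => rfl

theorem fusion_fst_lt_ord (hreg : κ.IsRegular) (hR : ∀ ξ < κ.ord, Nwd κ (R ξ))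
    (hp₀ : p₀.1 < κ.ord) {ξ : Ordinal.{0}} (hξ : ξ < κ.ord) : (fusion κ b R p₀ ξ).1 < κ.ord := by
  induction ξ using Ordinal.limitRecOn with
  | zero => simpa
  | add_one ζ ih =>
    have hζ := (lt_add_one ζ).trans hξ
    rw [fusion_add_one]
    exact (extendAvoiding_spec hreg.aleph0_le (hR ζ hζ) (ih hζ)).1
  | limit δ hδ ih =>
    rw [(isNormal_fusion_fst κ b R p₀).apply_of_isSuccLimit hδ]
    refine Ordinal.lift_iSup_lt_of_lt_cof ?_ fun ξ => ih ξ ξ.2 (ξ.2.trans hξ)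
    rw [mk_Iio_ordinal, lift_uzero, ← Ordinal.lift_cof, hreg.cof_ord, lift_lt]
    exact lt_ord.1 hξ

/- Position `i` is already fixed at stage `i + 1`, whose length exceeds `i`. -/
def fusionBranch (i : Ordinal.{0}) : Bool :=
  (fusion κ b R p₀ (i + 1)).2 i

theorem fusionBranch_mem_cyl (ξ : Ordinal.{0}) :
    fusionBranch κ b R p₀ ∈ cyl (fusion κ b R p₀ ξ).1 (fusion κ b R p₀ ξ).2 := by
  intro i hi
  have hi' : i < (fusion κ b R p₀ (i + 1)).1 :=
    (lt_add_one i).trans_le (isNormal_fusion_fst κ b R p₀).strictMono.le_apply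
  obtain h | h := le_total ξ (i + 1)
  · exact fusion_snd_mem_cyl κ b R p₀ h i hi
  · exact (fusion_snd_mem_cyl κ b R p₀ h i hi').symm

theorem exists_mem_cyl_avoiding_eq_on_club (hreg : κ.IsRegular) (hR : ∀ ξ < κ.ord, Nwd κ (R ξ))
    {β₀ : Ordinal.{0}} (hβ₀ : β₀ < κ.ord) (ν₀ : Ordinal.{0} → Bool) :
    ∃ η ∈ cyl β₀ ν₀, (∀ ξ < κ.ord, η ∉ R ξ) ∧ ∃ C, ClubIn κ.ord C ∧ ∀ i ∈ C, η i = b := by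
  set p₀ := (β₀, ν₀)
  have hlt : ∀ ξ < κ.ord, (fusion κ b R p₀ ξ).1 < κ.ord := fun ξ =>
    fusion_fst_lt_ord κ b R p₀ hreg hR hβ₀
  have hmem := fusionBranch_mem_cyl κ b R p₀
  refine ⟨fusionBranch κ b R p₀, by simpa using hmem 0, fun ξ hξ hηR => ?_, _,
    (isNormal_fusion_fst κ b R p₀).clubIn_image hlt, ?_⟩
  · have hdisj := (extendAvoiding_spec (b := b) hreg.aleph0_le (hR ξ hξ) (hlt ξ hξ)).2
    rw [← fusion_add_one] at hdisj
    exact hdisj.subset ⟨hmem (ξ + 1), hηR⟩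
  · rintro _ ⟨ξ, -, rfl⟩
    have hbit := extendAvoiding_snd_mem_cyl (κ := κ) (b := b) (A := R ξ)
      (p := fusion κ b R p₀ ξ) _ (lt_add_one _)
    rw [update_self, ← fusion_add_one] at hbit
    rw [hmem (ξ + 1) _ (fusion_add_one κ b R p₀ ξ ▸ lt_extendAvoiding_fst), hbit]

end Fusion

/-- CUB does not have the property of Baire: for every open `O`,
`(O \ CUB) ∪ (CUB \ O)` is not meager. -/
theorem CUB_not_Baire (κ : Cardinal.{0}) (hreg : κ.IsRegular) (hκ : ℵ₀ < κ) :
    ∀ O : Set (Ordinal.{0} → Bool), IsOpenB κ O →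
      ¬ MeagerB κ ((O \ CUB κ) ∪ (CUB κ \ O)) := by
  rintro O hO ⟨R, hR, hcov⟩
  have hnotMem : ∀ η, (∀ ξ < κ.ord, η ∉ R ξ) → η ∉ (O \ CUB κ) ∪ (CUB κ \ O) := fun η hη hmem => by
    obtain ⟨ξ, hξ, hηξ⟩ := mem_iUnion₂.1 (hcov hmem)
    exact hη ξ hξ hηξ
  obtain ⟨η, -, hη, C, hC, hηC⟩ :=
    exists_mem_cyl_avoiding_eq_on_club κ true R hreg hR hreg.ord_pos fun _ => false
  have hηO : η ∈ O := by_contra fun h => hnotMem η hη (.inr ⟨⟨C, hC, hηC⟩, h⟩)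
  obtain ⟨i, hi, hcylO⟩ := hO η hηO
  obtain ⟨η', hη'cyl, hη', C', hC', hη'C'⟩ :=
    exists_mem_cyl_avoiding_eq_on_club κ false R hreg hR hi η
  exact hnotMem η' hη' (.inl ⟨hcylO hη'cyl, notMem_CUB_of_eq_false_on_club hreg hκ hC' hη'C'⟩)
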